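/- arXiv:1302.5261 — 2 statements merged into one kernel-verified Lean document; each statement's English description precedes it below -/
import Mathlib

section
/- For all integers l ≥ 1, −l ≤ m ≤ l, and all x ∈ (−1, 1), F_{lm}(x) = [((l + 1) x − m) U_{lm}(x) − (2l + 1) ξ_{l+1,m} U_{l+1,m}(x)] / (√(l(l+1)) √(1 − x^2)), where ξ_{lm} := √((l+m)(l−m)/((2l+1)(2l−1))). -/
open MeasureTheory

/-- The (unnormalized) associated Legendre function
`P_l^m(x) = ((−1)^m / (2^l l!)) (1 − x^2)^{m/2} (d/dx)^{l+m} (x^2 − 1)^l`. -/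
noncomputable def Plm (l m : ℤ) (x : ℝ) : ℝ :=
  ((-1 : ℝ) ^ m / ((2 : ℝ) ^ l * (l.toNat.factorial : ℝ))) *
    (1 - x ^ 2) ^ ((m : ℝ) / 2) *
    iteratedDeriv (l + m).toNat (fun y : ℝ => (y ^ 2 - 1) ^ l) x

/-- The normalization factor `c_{lm} = √((2l+1)/2 · (l−m)!/(l+m)!)`. -/
noncomputable def clm (l m : ℤ) : ℝ :=
  Real.sqrt ((2 * (l : ℝ) + 1) / 2 * ((l - m).toNat.factorial : ℝ) /
    ((l + m).toNat.factorial : ℝ))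

/-- The normalized associated Legendre function `U_{lm} = c_{lm} P_l^m`,
with the convention `U_{lm} = 0` when `|m| > l`. -/
noncomputable def Ulm (l m : ℤ) (x : ℝ) : ℝ :=
  if |m| ≤ l then clm l m * Plm l m x else 0

/-- The function of Sheppard and Török
`F_{lm}(x) = (1/√(l(l+1))) [√(1−x²) U_{lm}'(x) − (m/√(1−x²)) U_{lm}(x)]`. -/
noncomputable def Flm (l m : ℤ) (x : ℝ) : ℝ :=
  (1 / Real.sqrt ((l : ℝ) * ((l : ℝ) + 1))) *
    (Real.sqrt (1 - x ^ 2) * deriv (Ulm l m) x -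
      ((m : ℝ) / Real.sqrt (1 - x ^ 2)) * Ulm l m x)

/-- The factor `ξ_{lm} = √((l+m)(l−m)/((2l+1)(2l−1)))`. -/
noncomputable def xilm (l m : ℤ) : ℝ :=
  Real.sqrt (((l : ℝ) + m) * ((l : ℝ) - m) / ((2 * (l : ℝ) + 1) * (2 * (l : ℝ) - 1)))

/-!
By Rodrigues' formula `P_l^m(x) = a (1 - x²)^{m/2} D^{l+m} w_l(x)` with `w_n = (X² - 1)^n`.
Expanding `D^{k+1} w_{n+1}` by Leibniz' rule once as `D^{k+1} (w_n (X² - 1))` and once as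
`D^k (2 (n + 1) X w_n)` and eliminating `D^{k-1} w_n` gives
`(2n + 1 - k) D^{k+1} w_{n+1} = 2 (n + 1) ((X² - 1) D^{k+1} w_n + (k + 1) X D^k w_n)`,
which for `n = l`, `k = l + m` is the three-term relation
`(1 - x²) P_l^m' = (l + 1) x P_l^m - (l - m + 1) P_{l+1}^m`.
The normalizations satisfy `(2l + 1) ξ_{l+1,m} c_{l+1,m} = (l - m + 1) c_{lm}`, so the same
relation holds for `U_{lm}` with `(2l + 1) ξ_{l+1,m} U_{l+1,m}` in the last term; dividing by
`√(1 - x²)` gives `F_{lm}`.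
-/

namespace Polynomial

variable {R : Type*} [CommRing R]

theorem iterate_derivative_succ_mul_X_sq_sub_one (p : R[X]) (k : ℕ) :
    derivative^[k + 1] (p * (X ^ 2 - 1)) =
      derivative^[k + 1] p * (X ^ 2 - 1) + 2 * ((k : R[X]) + 1) * X * derivative^[k] p +
        (k : R[X]) * ((k : R[X]) + 1) * derivative^[k - 1] p := by
  rw [mul_sub, mul_one, iterate_derivative_sub, sq, ← mul_assoc, iterate_derivative_mul_X,
    iterate_derivative_mul_X, iterate_derivative_mul_X, Nat.add_sub_cancel]
  simp only [nsmul_eq_mul]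
  push_cast
  ring

theorem iterate_derivative_X_sq_sub_one_pow_succ (n k : ℕ) :
    (2 * (n : R[X]) + 1 - (k : R[X])) * derivative^[k + 1] ((X ^ 2 - 1) ^ (n + 1)) =
      2 * ((n : R[X]) + 1) * ((X ^ 2 - 1) * derivative^[k + 1] ((X ^ 2 - 1) ^ n) +
        ((k : R[X]) + 1) * X * derivative^[k] ((X ^ 2 - 1) ^ n)) := by
  have h_leibniz := iterate_derivative_succ_mul_X_sq_sub_one ((X ^ 2 - 1 : R[X]) ^ n) k
  have h_chain : derivative^[k + 1] ((X ^ 2 - 1 : R[X]) ^ (n + 1)) =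
      2 * ((n : R[X]) + 1) * (X * derivative^[k] ((X ^ 2 - 1) ^ n) +
        (k : R[X]) * derivative^[k - 1] ((X ^ 2 - 1) ^ n)) := by
    rw [Function.iterate_succ_apply, derivative_pow_succ, derivative_sub, derivative_X_sq,
      derivative_one, sub_zero,
      show C ((n : R) + 1) * (X ^ 2 - 1) ^ n * (C 2 * X) =
          C (2 * ((n : R) + 1)) * ((X ^ 2 - 1) ^ n * X) by rw [C_mul]; ring,
      iterate_derivative_C_mul, iterate_derivative_mul_X, nsmul_eq_mul]
    simp only [C_mul, C_add, C_ofNat, C_1, C_eq_natCast]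
    ring
  rw [← pow_succ] at h_leibniz
  linear_combination (2 * ((n : R[X]) + 1)) * h_leibniz - ((k : R[X]) + 1) * h_chain

theorem iteratedDeriv_eval {𝕜 : Type*} [NontriviallyNormedField 𝕜] (p : 𝕜[X]) (k : ℕ) :
    iteratedDeriv k (fun x => p.eval x) = fun x => (derivative^[k] p).eval x := by
  induction k with
  | zero => rfl
  | succ k ih =>
    ext x
    rw [iteratedDeriv_succ, ih, Function.iterate_succ_apply', Polynomial.deriv]

end Polynomial

open Polynomial Set

theorem Plm_natCast (n : ℕ) (m : ℤ) :
    Plm n m = fun x => (-1 : ℝ) ^ m / (2 ^ n * (n.factorial : ℝ)) *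
      (1 - x ^ 2) ^ ((m : ℝ) / 2) *
        (derivative^[(n + m).toNat] ((X ^ 2 - 1 : ℝ[X]) ^ n)).eval x := by
  have h : (fun y : ℝ => (y ^ 2 - 1) ^ (n : ℤ)) =
      fun y => ((X ^ 2 - 1 : ℝ[X]) ^ n).eval y := by
    simp
  ext x
  rw [Plm, h, iteratedDeriv_eval]
  simp

theorem hasDerivAt_one_sub_sq_rpow (s : ℝ) {x : ℝ} (hx : x ^ 2 < 1) :
    HasDerivAt (fun y => (1 - y ^ 2) ^ s) (-2 * s * x * (1 - x ^ 2) ^ s / (1 - x ^ 2)) x := by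
  have hpos : 0 < 1 - x ^ 2 := by linarith
  have := ((hasDerivAt_pow 2 x).const_sub 1).rpow_const (p := s) (Or.inl hpos.ne')
  convert this using 1
  rw [Real.rpow_sub_one hpos.ne']
  push_cast
  ring

theorem one_sub_sq_mul_deriv_Plm {l m : ℤ} (hl : 0 ≤ l) (hm : -l ≤ m) {x : ℝ}
    (hx : x ∈ Ioo (-1 : ℝ) 1) :
    (1 - x ^ 2) * deriv (Plm l m) x =
      ((l : ℝ) + 1) * x * Plm l m x - ((l : ℝ) - m + 1) * Plm (l + 1) m x := by
  lift l to ℕ using hl with n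
  obtain ⟨k, hk⟩ : ∃ k : ℕ, (n : ℤ) + m = k := ⟨(n + m).toNat, by omega⟩
  have hx2 : x ^ 2 < 1 := by nlinarith [hx.1, hx.2]
  have hpos : 0 < 1 - x ^ 2 := by linarith
  have hrec := congrArg (eval x) (iterate_derivative_X_sq_sub_one_pow_succ (R := ℝ) n k)
  simp only [eval_mul, eval_add, eval_sub, eval_pow, eval_natCast, eval_X, eval_one,
    eval_ofNat] at hrec
  have hkm : (k : ℝ) = n + m := by exact_mod_cast hk.symm
  rw [hkm] at hrec
  set a : ℝ := (-1 : ℝ) ^ m / (2 ^ n * (n.factorial : ℝ))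
  set w : ℝ[X] := (X ^ 2 - 1) ^ n
  have hP : Plm n m = fun y => a * (1 - y ^ 2) ^ ((m : ℝ) / 2) * (derivative^[k] w).eval y := by
    rw [Plm_natCast, hk, Int.toNat_natCast]
  have hP_succ : Plm (n + 1) m x =
      a / (2 * ((n : ℝ) + 1)) * (1 - x ^ 2) ^ ((m : ℝ) / 2) *
        (derivative^[k + 1] ((X ^ 2 - 1) ^ (n + 1))).eval x := by
    rw [show (n : ℤ) + 1 = (n + 1 : ℕ) by push_cast; rfl, Plm_natCast,
      show ((n + 1 : ℕ) : ℤ) + m = (k + 1 : ℕ) by push_cast; omega, Int.toNat_natCast]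
    simp only [a, pow_succ, Nat.factorial_succ]
    push_cast
    field_simp
  have hderiv : HasDerivAt (Plm n m)
      (a * ((-2 * ((m : ℝ) / 2) * x * (1 - x ^ 2) ^ ((m : ℝ) / 2) / (1 - x ^ 2)) *
        (derivative^[k] w).eval x +
        (1 - x ^ 2) ^ ((m : ℝ) / 2) * (derivative^[k + 1] w).eval x)) x := by
    rw [hP]
    have hG : HasDerivAt (fun y => (derivative^[k] w).eval y)
        ((derivative^[k + 1] w).eval x) x := by
      rw [Function.iterate_succ_apply']
      exact Polynomial.hasDerivAt _ x
    exact (((hasDerivAt_one_sub_sq_rpow ((m : ℝ) / 2) hx2).const_mul a).mul hG).congr_deriv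
      (by ring)
  rw [hderiv.deriv, hP_succ, hP]
  field_simp
  push_cast
  linear_combination a * hrec

theorem two_mul_add_one_mul_xilm_mul_clm_succ {l m : ℤ} (hm₁ : -l ≤ m) (hm₂ : m ≤ l) :
    (2 * (l : ℝ) + 1) * xilm (l + 1) m * clm (l + 1) m = ((l : ℝ) - m + 1) * clm l m := by
  obtain ⟨i, hi⟩ : ∃ i : ℕ, l - m = i := ⟨(l - m).toNat, by omega⟩
  obtain ⟨j, hj⟩ : ∃ j : ℕ, l + m = j := ⟨(l + m).toNat, by omega⟩
  have hl : (0 : ℝ) ≤ l := by exact_mod_cast (show 0 ≤ l by omega)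
  have hi' : (l : ℝ) - m = i := by exact_mod_cast hi
  have hj' : (l : ℝ) + m = j := by exact_mod_cast hj
  have hrhs : 0 ≤ ((l : ℝ) - m + 1) * clm l m := by
    rw [hi']; exact mul_nonneg (by positivity) (Real.sqrt_nonneg _)
  rw [← pow_left_inj₀ (by unfold xilm clm; positivity) hrhs two_ne_zero]
  unfold clm xilm
  rw [show l + 1 - m = (i + 1 : ℕ) by omega, show l + 1 + m = (j + 1 : ℕ) by omega, hi, hj]
  simp only [Int.toNat_natCast, mul_pow]
  push_cast
  rw [hi', show (l : ℝ) + 1 + m = j + 1 by linarith, show (l : ℝ) + 1 - m = i + 1 by linarith,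
    show 2 * ((l : ℝ) + 1) - 1 = 2 * l + 1 by ring]
  rw [Real.sq_sqrt (by positivity), Real.sq_sqrt (by positivity), Real.sq_sqrt (by positivity),
    Nat.factorial_succ, Nat.factorial_succ]
  push_cast
  field_simp

theorem one_sub_sq_mul_deriv_Ulm {l m : ℤ} (hm₁ : -l ≤ m) (hm₂ : m ≤ l) {x : ℝ}
    (hx : x ∈ Ioo (-1 : ℝ) 1) :
    (1 - x ^ 2) * deriv (Ulm l m) x =
      ((l : ℝ) + 1) * x * Ulm l m x - (2 * (l : ℝ) + 1) * xilm (l + 1) m * Ulm (l + 1) m x := by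
  have hU : ∀ l', |m| ≤ l' → Ulm l' m = fun y => clm l' m * Plm l' m y :=
    fun _ h => funext fun _ => if_pos h
  rw [hU l (abs_le.2 ⟨hm₁, hm₂⟩), hU (l + 1) (abs_le.2 ⟨by omega, by omega⟩),
    deriv_const_mul_field']
  dsimp only
  linear_combination clm l m * one_sub_sq_mul_deriv_Plm (by omega) hm₁ hx +
    Plm (l + 1) m x * two_mul_add_one_mul_xilm_mul_clm_succ hm₁ hm₂

theorem Flm_eq_upper_general (l m : ℤ) (hm₁ : -l ≤ m) (hm₂ : m ≤ l)
    (x : ℝ) (hx : x ∈ Set.Ioo (-1 : ℝ) 1) :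
    Flm l m x =
      ((((l : ℝ) + 1) * x - m) * Ulm l m x -
          (2 * (l : ℝ) + 1) * xilm (l + 1) m * Ulm (l + 1) m x) /
        (Real.sqrt ((l : ℝ) * ((l : ℝ) + 1)) * Real.sqrt (1 - x ^ 2)) := by
  have hpos : 0 < 1 - x ^ 2 := by nlinarith [hx.1, hx.2]
  have hsqrt : 0 < Real.sqrt (1 - x ^ 2) := Real.sqrt_pos.2 hpos
  have hbracket : Real.sqrt (1 - x ^ 2) * deriv (Ulm l m) x -
      (m / Real.sqrt (1 - x ^ 2)) * Ulm l m x =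
      ((((l : ℝ) + 1) * x - m) * Ulm l m x -
        (2 * (l : ℝ) + 1) * xilm (l + 1) m * Ulm (l + 1) m x) / Real.sqrt (1 - x ^ 2) := by
    field_simp
    rw [Real.sq_sqrt hpos.le]
    linear_combination one_sub_sq_mul_deriv_Ulm hm₁ hm₂ hx
  rw [Flm, hbracket]
  ring

/-- Alternative expression of `F_{lm}` in terms of `U_{lm}` and `U_{l+1,m}`. -/
theorem Flm_eq_upper (l m : ℤ) (hl : 1 ≤ l) (hm₁ : -l ≤ m) (hm₂ : m ≤ l)
    (x : ℝ) (hx : x ∈ Set.Ioo (-1 : ℝ) 1) :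
    Flm l m x =
      ((((l : ℝ) + 1) * x - m) * Ulm l m x -
          (2 * (l : ℝ) + 1) * xilm (l + 1) m * Ulm (l + 1) m x) /
        (Real.sqrt ((l : ℝ) * ((l : ℝ) + 1)) * Real.sqrt (1 - x ^ 2)) :=
  Flm_eq_upper_general l m hm₁ hm₂ x hx
end

section
/- For all integers l ≥ 1, −l ≤ m ≤ l, and all x ∈ (−1, 1), F_{lm}(x) = (−1/√(l(l+1))) [a^+_{lm} U_{l,m+1}(x) + a^−_{lm} U_{l,m−1}(x) + b^+_{lm} U_{l−1,m+1}(x) + b^−_{lm} U_{l−1,m−1}(x)], where a^±_{lm} := ±√((l ∓ m)(l ± m + 1))/2 and b^±_{lm} := −√((2l+1)/(2l−1)) · √((l ∓ m)(l ∓ m − 1))/2; in particular the right-hand side extends F_{lm} without the singular factor (1 − x^2)^{−1/2}. -/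
open MeasureTheory

/-- The factor `a⁺_{lm} = +√((l−m)(l+m+1))/2`. -/
noncomputable def aP (l m : ℤ) : ℝ :=
  Real.sqrt (((l : ℝ) - m) * ((l : ℝ) + m + 1)) / 2

/-- The factor `a⁻_{lm} = −√((l+m)(l−m+1))/2`. -/
noncomputable def aM (l m : ℤ) : ℝ :=
  -(Real.sqrt (((l : ℝ) + m) * ((l : ℝ) - m + 1)) / 2)

/-- The factor `b⁺_{lm} = −√((2l+1)/(2l−1))·√((l−m)(l−m−1))/2`. -/
noncomputable def bP (l m : ℤ) : ℝ :=
  -(Real.sqrt ((2 * (l : ℝ) + 1) / (2 * (l : ℝ) - 1)) *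
    Real.sqrt (((l : ℝ) - m) * ((l : ℝ) - m - 1)) / 2)

/-- The factor `b⁻_{lm} = −√((2l+1)/(2l−1))·√((l+m)(l+m−1))/2`. -/
noncomputable def bM (l m : ℤ) : ℝ :=
  -(Real.sqrt ((2 * (l : ℝ) + 1) / (2 * (l : ℝ) - 1)) *
    Real.sqrt (((l : ℝ) + m) * ((l : ℝ) + m - 1)) / 2)

open Polynomial
open scoped Nat

/-!
Write `k = l + m` and `D^l_k = (d/dx)^k (x² - 1)^l`. Rodrigues' formula reads
`U_{lm} = κ_{lm} (1 - x²)^{m/2} D^l_k` with `κ_{lm} = c_{lm} (-1)^m / (2^l l!)`, and the square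
roots in `a^±_{lm}`, `b^±_{lm}` are exactly the ratios of normalisations that turn `κ_{l',m±1}`
into a rational multiple of `κ_{lm}`. Hence `F_{lm}` and each of the four products on the right
are `κ_{lm} (1 - x²)^{(m-1)/2}` times a polynomial in `D^l_{k-1}, D^l_k, D^l_{k+1}, D^{l-1}_{k-2},
D^{l-1}_k` (a product whose `U` is out of range has a vanishing coefficient or polynomial), and
the theorem becomes a polynomial identity. That identity holds at `k = 0`, and its derivative is
the identity at `k + 1` modulo `D^l_{k+1} = 2l (x D^{l-1}_k + k D^{l-1}_{k-1})`, the Leibniz rule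
applied to `(d/dx) (x² - 1)^l = 2lx (x² - 1)^{l-1}`.
-/

theorem Polynomial.iteratedDeriv_eval_s3 {𝕜 : Type*} [NontriviallyNormedField 𝕜] (p : 𝕜[X])
    (k : ℕ) : iteratedDeriv k (fun x => p.eval x) = fun x => (derivative^[k] p).eval x := by
  induction k with
  | zero => simp
  | succ k ih =>
    ext x
    rw [iteratedDeriv_succ, ih, Polynomial.deriv, Function.iterate_succ_apply']

theorem Real.sqrt_mul_sqrt_eq_mul_sqrt {a b c r : ℝ} (ha : 0 ≤ a) (hr : 0 ≤ r)
    (h : a * b = r ^ 2 * c) : √a * √b = r * √c := by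
  rw [← Real.sqrt_mul ha, h, Real.sqrt_mul (sq_nonneg r), Real.sqrt_sq hr]

noncomputable def rodriguesDeriv (n k : ℕ) : ℝ[X] := derivative^[k] ((X ^ 2 - 1) ^ n)

theorem derivative_rodriguesDeriv (n k : ℕ) :
    derivative (rodriguesDeriv n k) = rodriguesDeriv n (k + 1) :=
  (Function.iterate_succ_apply' _ _ _).symm

theorem rodriguesDeriv_eq_zero_of_lt {n k : ℕ} (h : 2 * n < k) : rodriguesDeriv n k = 0 := by
  refine iterate_derivative_eq_zero ?_
  calc ((X ^ 2 - 1 : ℝ[X]) ^ n).natDegree ≤ n * (X ^ 2 - C 1 : ℝ[X]).natDegree := by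
        rw [map_one]; exact natDegree_pow_le
    _ < k := by rw [natDegree_X_pow_sub_C]; omega

theorem rodriguesDeriv_succ_succ (n k : ℕ) :
    rodriguesDeriv (n + 1) (k + 1) =
      2 * ((n : ℝ[X]) + 1) *
        (X * rodriguesDeriv n k + (k : ℝ[X]) * rodriguesDeriv n (k - 1)) := by
  have h : derivative ((X ^ 2 - 1 : ℝ[X]) ^ (n + 1)) =
      ((2 * (n + 1) : ℕ) : ℝ[X]) * ((X ^ 2 - 1) ^ n * X) := by
    rw [derivative_pow]; simp; ring
  rw [rodriguesDeriv, Function.iterate_succ_apply, h, iterate_derivative_natCast_mul,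
    iterate_derivative_mul_X, nsmul_eq_mul, rodriguesDeriv, rodriguesDeriv]
  push_cast
  ring

/-- The truncated indices `k - 1` and `k - 2` only occur where their coefficients vanish. -/
theorem rodriguesDeriv_ladder (n k : ℕ) :
    (1 - X ^ 2) * rodriguesDeriv (n + 1) (k + 1)
      - 2 * ((k : ℝ[X]) - ((n : ℝ[X]) + 1)) * (1 + X) * rodriguesDeriv (n + 1) k
      + (k : ℝ[X]) * (2 * ((n : ℝ[X]) + 1) - (k : ℝ[X]) + 1) * rodriguesDeriv (n + 1) (k - 1)
      + 2 * ((n : ℝ[X]) + 1) * (1 - X ^ 2) * rodriguesDeriv n k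
      + 2 * ((n : ℝ[X]) + 1) * ((k : ℝ[X]) * ((k : ℝ[X]) - 1)) * rodriguesDeriv n (k - 2)
      = 0 := by
  induction k with
  | zero =>
    have hD₁ := rodriguesDeriv_succ_succ n 0
    have hD₀ : rodriguesDeriv (n + 1) 0 = (X ^ 2 - 1) * rodriguesDeriv n 0 := by
      simp [rodriguesDeriv, pow_succ, mul_comm]
    simp only [Nat.cast_zero, zero_mul, add_zero, zero_sub] at hD₁ ⊢
    linear_combination (1 - X ^ 2) * hD₁ + 2 * ((n : ℝ[X]) + 1) * (1 + X) * hD₀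
  | succ k ih =>
    have hderiv := congrArg derivative ih
    simp only [derivative_add, derivative_sub, derivative_mul, derivative_natCast,
      derivative_ofNat, derivative_one, derivative_X, derivative_X_sq, derivative_zero, map_ofNat,
      derivative_rodriguesDeriv] at hderiv
    have hD : (k : ℝ[X]) * rodriguesDeriv (n + 1) (k - 1 + 1) = k * rodriguesDeriv (n + 1) k := by
      cases k <;> simp
    have hE : (k : ℝ[X]) * (k - 1) * rodriguesDeriv n (k - 2 + 1) =
        k * (k - 1) * rodriguesDeriv n (k - 1) := by
      rcases k with _ | _ | k <;> simp
    rw [Nat.add_sub_cancel, show k + 1 - 2 = k - 1 by omega]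
    push_cast
    linear_combination hderiv - (2 * ((n : ℝ[X]) + 1) - k + 1) * hD
      - 2 * ((n : ℝ[X]) + 1) * hE - 2 * rodriguesDeriv_succ_succ n k

theorem clm_eq_sqrt {l m : ℤ} {p q : ℕ} (hp : l - m = p) (hq : l + m = q) :
    clm l m = √((2 * l + 1) / 2 * p ! / q !) := by
  rw [clm, hp, hq, Int.toNat_natCast, Int.toNat_natCast]

noncomputable def legendreCoeff (n : ℕ) (m : ℤ) : ℝ :=
  clm n m * ((-1) ^ m / (2 ^ n * n !))

section

variable {n k : ℕ} {m : ℤ} {x : ℝ}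

theorem Ulm_eq_rodriguesDeriv (hk : n + m = k) :
    Ulm n m x =
      legendreCoeff n m * (1 - x ^ 2) ^ ((m : ℝ) / 2) * (rodriguesDeriv n k).eval x := by
  unfold Ulm
  split_ifs with hm
  · have hpoly : (fun y : ℝ => (y ^ 2 - 1) ^ (n : ℤ)) =
        fun y => ((X ^ 2 - 1) ^ n : ℝ[X]).eval y := by
      ext y; simp
    rw [Plm, hpoly, show (n + m).toNat = k by omega, Polynomial.iteratedDeriv_eval_s3, legendreCoeff]
    simp [rodriguesDeriv]
    ring
  · rw [abs_le] at hm
    rw [rodriguesDeriv_eq_zero_of_lt (by omega)]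
    simp

theorem aP_mul_legendreCoeff (h₁ : -n ≤ m) (h₂ : m < n) :
    aP n m * legendreCoeff n (m + 1) = -(legendreCoeff n m / 2) := by
  obtain ⟨p, hp⟩ : ∃ p : ℕ, (n : ℤ) - m = p + 1 := ⟨(n - m - 1).toNat, by omega⟩
  obtain ⟨q, hq⟩ : ∃ q : ℕ, (n : ℤ) + m = q := ⟨(n + m).toNat, by omega⟩
  have hc : aP n m * clm n (m + 1) = clm n m / 2 := by
    have hpR : (n : ℝ) - m = p + 1 := by exact_mod_cast hp
    have hqR : (n : ℝ) + m = q := by exact_mod_cast hq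
    rw [aP, clm_eq_sqrt (p := p) (q := q + 1) (by omega) (by push_cast; omega),
      clm_eq_sqrt (p := p + 1) (by push_cast; omega) hq, div_mul_eq_mul_div, Int.cast_natCast,
      hpR, hqR, Real.sqrt_mul_sqrt_eq_mul_sqrt (r := 1) (by positivity) zero_le_one, one_mul]
    push_cast [Nat.factorial_succ]
    field_simp
  rw [legendreCoeff, legendreCoeff, zpow_add_one₀ (by norm_num)]
  linear_combination (-(-1 : ℝ) ^ m / (2 ^ n * n !)) * hc

theorem aM_mul_legendreCoeff (h₁ : -n < m) (h₂ : m ≤ n) :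
    aM n m * legendreCoeff n (m - 1) = (n + m) * (n - m + 1) / 2 * legendreCoeff n m := by
  obtain ⟨p, hp⟩ : ∃ p : ℕ, (n : ℤ) - m = p := ⟨(n - m).toNat, by omega⟩
  obtain ⟨q, hq⟩ : ∃ q : ℕ, (n : ℤ) + m = q + 1 := ⟨(n + m - 1).toNat, by omega⟩
  have hpR : (n : ℝ) - m = p := by exact_mod_cast hp
  have hqR : (n : ℝ) + m = q + 1 := by exact_mod_cast hq
  have hc : aM n m * clm n (m - 1) = -((q + 1) * (p + 1) / 2) * clm n m := by
    rw [aM, clm_eq_sqrt (p := p + 1) (q := q) (by push_cast; omega) (by omega),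
      clm_eq_sqrt (p := p) (q := q + 1) hp (by push_cast; omega), Int.cast_natCast, hpR, hqR,
      neg_mul, div_mul_eq_mul_div,
      Real.sqrt_mul_sqrt_eq_mul_sqrt (r := (q + 1) * (p + 1)) (by positivity) (by positivity)]
    · ring
    · push_cast [Nat.factorial_succ]
      field_simp
  rw [legendreCoeff, legendreCoeff, zpow_sub_one₀ (by norm_num), hpR, hqR]
  linear_combination ((-1 : ℝ) ^ m * (-1)⁻¹ / (2 ^ n * n !)) * hc

theorem bP_mul_legendreCoeff (h₁ : -(n + 1 : ℤ) ≤ m) (h₂ : m < n) :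
    bP (n + 1 : ℕ) m * legendreCoeff n (m + 1) = (n + 1) * legendreCoeff (n + 1) m := by
  obtain ⟨p, hp⟩ : ∃ p : ℕ, (n : ℤ) - m = p + 1 := ⟨(n - m - 1).toNat, by omega⟩
  obtain ⟨q, hq⟩ : ∃ q : ℕ, (n : ℤ) + m + 1 = q := ⟨(n + m + 1).toNat, by omega⟩
  have hpR : (n : ℝ) - m = p + 1 := by exact_mod_cast hp
  have hqR : (n : ℝ) + m + 1 = q := by exact_mod_cast hq
  have hc : bP (n + 1 : ℕ) m * clm n (m + 1) = -(clm (n + 1 : ℕ) m / 2) := by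
    have hQ : 0 ≤ (2 * ((n : ℝ) + 1) + 1) / (2 * ((n : ℝ) + 1) - 1) :=
      div_nonneg (by positivity) (by linarith [n.cast_nonneg (α := ℝ)])
    rw [bP, clm_eq_sqrt (p := p) (q := q) (by omega) (by omega),
      clm_eq_sqrt (p := p + 2) (q := q) (by push_cast; omega) (by push_cast; omega)]
    push_cast
    rw [show ((n : ℝ) + 1 - m) * ((n : ℝ) + 1 - m - 1) = (p + 2) * (p + 1) by
        linear_combination ((n : ℝ) - m + p + 2) * hpR,
      ← Real.sqrt_mul hQ, neg_mul, div_mul_eq_mul_div,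
      Real.sqrt_mul_sqrt_eq_mul_sqrt (r := 1) (mul_nonneg hQ (by positivity)) zero_le_one, one_mul]
    have : 2 * ((n : ℝ) + 1) - 1 ≠ 0 := by linarith [n.cast_nonneg (α := ℝ)]
    push_cast [Nat.factorial_succ]
    field_simp
    ring
  rw [legendreCoeff, legendreCoeff, zpow_add_one₀ (by norm_num)]
  push_cast [Nat.factorial_succ, pow_succ] at hc ⊢
  field_simp
  linear_combination -2 * hc

theorem bM_mul_legendreCoeff (h₁ : -n < m) (h₂ : m ≤ n + 1) :
    bM (n + 1 : ℕ) m * legendreCoeff n (m - 1) =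
      (n + 1) * ((n + 1 + m) * (n + m)) * legendreCoeff (n + 1) m := by
  obtain ⟨p, hp⟩ : ∃ p : ℕ, (n : ℤ) + 1 - m = p := ⟨(n + 1 - m).toNat, by omega⟩
  obtain ⟨q, hq⟩ : ∃ q : ℕ, (n : ℤ) + m - 1 = q := ⟨(n + m - 1).toNat, by omega⟩
  have hqR : (n : ℝ) + m - 1 = q := by exact_mod_cast hq
  have hc :
      bM (n + 1 : ℕ) m * clm n (m - 1) = -((q + 2) * (q + 1) / 2) * clm (n + 1 : ℕ) m := by
    have hQ : 0 ≤ (2 * ((n : ℝ) + 1) + 1) / (2 * ((n : ℝ) + 1) - 1) :=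
      div_nonneg (by positivity) (by linarith [n.cast_nonneg (α := ℝ)])
    rw [bM, clm_eq_sqrt (p := p) (q := q) (by omega) (by omega),
      clm_eq_sqrt (p := p) (q := q + 2) (by push_cast; omega) (by push_cast; omega)]
    push_cast
    rw [show ((n : ℝ) + 1 + m) * ((n : ℝ) + 1 + m - 1) = (q + 2) * (q + 1) by
        linear_combination ((n : ℝ) + m + q + 2) * hqR,
      ← Real.sqrt_mul hQ, neg_mul, div_mul_eq_mul_div,
      Real.sqrt_mul_sqrt_eq_mul_sqrt (r := (q + 2) * (q + 1)) (mul_nonneg hQ (by positivity))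
        (by positivity)]
    · ring
    · have : 2 * ((n : ℝ) + 1) - 1 ≠ 0 := by linarith [n.cast_nonneg (α := ℝ)]
      push_cast [Nat.factorial_succ]
      field_simp
      ring
  rw [legendreCoeff, legendreCoeff, zpow_sub_one₀ (by norm_num)]
  push_cast [Nat.factorial_succ, pow_succ] at hc ⊢
  rw [show (n : ℝ) + 1 + m = q + 2 by linear_combination hqR,
    show (n : ℝ) + m = q + 1 by linear_combination hqR]
  field_simp
  linear_combination -2 * hc

theorem Flm_eq_rodriguesDeriv (hk : n + m = k) (hx : 0 < 1 - x ^ 2) :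
    Flm n m x = 1 / √(((n : ℤ) : ℝ) * (((n : ℤ) : ℝ) + 1)) *
      (legendreCoeff n m * (1 - x ^ 2) ^ (((m : ℝ) - 1) / 2) *
        ((1 - x ^ 2) * (rodriguesDeriv n (k + 1)).eval x
          - (k - n) * (1 + x) * (rodriguesDeriv n k).eval x)) := by
  have hU : Ulm n m = fun y =>
      legendreCoeff n m * ((1 - y ^ 2) ^ ((m : ℝ) / 2) * (rodriguesDeriv n k).eval y) := by
    ext y; rw [Ulm_eq_rodriguesDeriv hk, mul_assoc]
  have hderiv : HasDerivAt (Ulm n m) (legendreCoeff n m *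
      (-(2 * x) * (m / 2) * (1 - x ^ 2) ^ ((m : ℝ) / 2 - 1) * (rodriguesDeriv n k).eval x
        + (1 - x ^ 2) ^ ((m : ℝ) / 2) * (rodriguesDeriv n (k + 1)).eval x)) x := by
    have hs : HasDerivAt (fun y : ℝ => 1 - y ^ 2) (-(2 * x)) x := by
      simpa using (hasDerivAt_pow 2 x).const_sub 1
    have hD := (rodriguesDeriv n k).hasDerivAt x
    rw [derivative_rodriguesDeriv] at hD
    rw [hU]
    exact (((hs.rpow_const (Or.inl hx.ne')).mul hD).const_mul _).congr_deriv (by ring)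
  have hsqrt : √(1 - x ^ 2) ^ 2 = 1 - x ^ 2 := Real.sq_sqrt hx.le
  have hpow :
      (1 - x ^ 2) ^ ((m : ℝ) / 2) = (1 - x ^ 2) ^ (((m : ℝ) - 1) / 2) * √(1 - x ^ 2) := by
    rw [Real.sqrt_eq_rpow, ← Real.rpow_add hx]; congr 1; ring
  have hpow' : (1 - x ^ 2) ^ ((m : ℝ) / 2 - 1) =
      (1 - x ^ 2) ^ (((m : ℝ) - 1) / 2) / √(1 - x ^ 2) := by
    rw [Real.sqrt_eq_rpow, ← Real.rpow_sub hx]; congr 1; ring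
  have hmR : (m : ℝ) = k - n := by exact_mod_cast (show m = k - n by omega)
  have : 0 < √(1 - x ^ 2) := Real.sqrt_pos.mpr hx
  rw [Flm, hderiv.deriv, Ulm_eq_rodriguesDeriv hk, hpow, hpow', hmR]
  field_simp
  rw [hsqrt]
  ring

theorem aP_mul_Ulm_add_one (hk : n + m = k) (hm : m ≤ n) (hx : 0 < 1 - x ^ 2) :
    aP n m * Ulm n (m + 1) x = -(1 / 2) *
      (legendreCoeff n m * (1 - x ^ 2) ^ (((m : ℝ) - 1) / 2)) *
        ((1 - x ^ 2) * (rodriguesDeriv n (k + 1)).eval x) := by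
  rw [Ulm_eq_rodriguesDeriv (k := k + 1) (by push_cast; omega)]
  rcases hm.lt_or_eq with hm | rfl
  · have hpow : (1 - x ^ 2) ^ (((m + 1 : ℤ) : ℝ) / 2) =
        (1 - x ^ 2) ^ (((m : ℝ) - 1) / 2) * (1 - x ^ 2) := by
      rw [← Real.rpow_add_one hx.ne']; congr 1; push_cast; ring
    rw [hpow]
    linear_combination ((1 - x ^ 2) ^ (((m : ℝ) - 1) / 2) * (1 - x ^ 2) *
      (rodriguesDeriv n (k + 1)).eval x) * aP_mul_legendreCoeff (by omega) hm
  · simp [rodriguesDeriv_eq_zero_of_lt (show 2 * n < k + 1 by omega)]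

theorem aM_mul_Ulm_sub_one (hk : n + m = k) (hm : m ≤ n) :
    aM n m * Ulm n (m - 1) x = k * (2 * n - k + 1) / 2 *
      (legendreCoeff n m * (1 - x ^ 2) ^ (((m : ℝ) - 1) / 2)) *
        (rodriguesDeriv n (k - 1)).eval x := by
  have hmR : (m : ℝ) = k - n := by exact_mod_cast (show m = k - n by omega)
  rcases k with _ | k
  · simp [aM, hmR]
  · have hb := aM_mul_legendreCoeff (by omega) hm
    rw [hmR] at hb
    rw [Ulm_eq_rodriguesDeriv (k := k) (by omega), Nat.add_sub_cancel]
    push_cast at hb ⊢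
    linear_combination ((1 - x ^ 2) ^ (((m : ℝ) - 1) / 2) * (rodriguesDeriv n k).eval x) * hb

theorem bP_mul_Ulm_add_one (hk : (n + 1 : ℕ) + m = k) (hx : 0 < 1 - x ^ 2) :
    bP (n + 1 : ℕ) m * Ulm n (m + 1) x = (n + 1) *
      (legendreCoeff (n + 1) m * (1 - x ^ 2) ^ (((m : ℝ) - 1) / 2)) *
        ((1 - x ^ 2) * (rodriguesDeriv n k).eval x) := by
  rw [Ulm_eq_rodriguesDeriv (k := k) (by push_cast at hk ⊢; omega)]
  rcases lt_or_ge m n with hm | hm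
  · have hpow : (1 - x ^ 2) ^ (((m + 1 : ℤ) : ℝ) / 2) =
        (1 - x ^ 2) ^ (((m : ℝ) - 1) / 2) * (1 - x ^ 2) := by
      rw [← Real.rpow_add_one hx.ne']; congr 1; push_cast; ring
    rw [hpow]
    linear_combination ((1 - x ^ 2) ^ (((m : ℝ) - 1) / 2) * (1 - x ^ 2) *
      (rodriguesDeriv n k).eval x) * bP_mul_legendreCoeff (by push_cast at hk; omega) hm
  · simp [rodriguesDeriv_eq_zero_of_lt (show 2 * n < k by push_cast at hk; omega)]

theorem bM_mul_Ulm_sub_one (hk : (n + 1 : ℕ) + m = k) (hm : m ≤ n + 1) :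
    bM (n + 1 : ℕ) m * Ulm n (m - 1) x = (n + 1) * (k * (k - 1)) *
      (legendreCoeff (n + 1) m * (1 - x ^ 2) ^ (((m : ℝ) - 1) / 2)) *
        (rodriguesDeriv n (k - 2)).eval x := by
  have hmR : (m : ℝ) = k - (n + 1) := by
    exact_mod_cast (show m = k - (n + 1) by push_cast at hk; omega)
  rcases k with _ | _ | k
  · simp [bM, hmR]
  · simp [bM, hmR]
  · have hd := bM_mul_legendreCoeff (by push_cast at hk; omega) hm
    rw [hmR] at hd
    rw [Ulm_eq_rodriguesDeriv (k := k) (by push_cast at hk; omega),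
      show k + 1 + 1 - 2 = k by omega]
    push_cast at hd ⊢
    linear_combination ((1 - x ^ 2) ^ (((m : ℝ) - 1) / 2) * (rodriguesDeriv n k).eval x) * hd

end

/-- Singularity-free expression of `F_{lm}` in terms of normalized associated
Legendre functions of orders `m ± 1`. -/
theorem Flm_singularity_free (l m : ℤ) (hl : 1 ≤ l) (hm₁ : -l ≤ m) (hm₂ : m ≤ l)
    (x : ℝ) (hx : x ∈ Set.Ioo (-1 : ℝ) 1) :
    Flm l m x =
      (-1 / Real.sqrt ((l : ℝ) * ((l : ℝ) + 1))) *
        (aP l m * Ulm l (m + 1) x + aM l m * Ulm l (m - 1) x +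
          bP l m * Ulm (l - 1) (m + 1) x + bM l m * Ulm (l - 1) (m - 1) x) := by
  obtain ⟨n, rfl⟩ : ∃ n : ℕ, l = (n + 1 : ℕ) := ⟨l.toNat - 1, by omega⟩
  obtain ⟨k, hk⟩ : ∃ k : ℕ, ((n + 1 : ℕ) : ℤ) + m = k :=
    ⟨(n + 1 + m).toNat, by omega⟩
  have hs : 0 < 1 - x ^ 2 := by nlinarith [hx.1, hx.2]
  have hladder := congrArg (eval x) (rodriguesDeriv_ladder n k)
  simp only [eval_add, eval_sub, eval_mul, eval_pow, eval_X, eval_one, eval_natCast, eval_ofNat,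
    eval_zero] at hladder
  rw [show ((n + 1 : ℕ) : ℤ) - 1 = n by omega, Flm_eq_rodriguesDeriv hk hs,
    aP_mul_Ulm_add_one hk hm₂ hs, aM_mul_Ulm_sub_one hk hm₂, bP_mul_Ulm_add_one hk hs,
    bM_mul_Ulm_sub_one hk (by omega)]
  push_cast
  linear_combination legendreCoeff (n + 1) m * (1 - x ^ 2) ^ (((m : ℝ) - 1) / 2) /
    (2 * √(((n : ℝ) + 1) * ((n : ℝ) + 1 + 1))) * hladder
end
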